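/- Every zero-mean finite positive measure on the unit circle supported on at most three points is an extreme direction of the cone E of zero-mean positive measures: if μ = μ₁ + μ₂ with μ₁, μ₂ ∈ E, then μ₁ and μ₂ are nonnegative scalar multiples of μ. -/

import Mathlib

open Complex MeasureTheory
open scoped NNReal

/-- The unit circle in `ℂ`. -/
noncomputable abbrev UnitCircle := Metric.sphere (0 : ℂ) 1

/-- The cone of positive finite Borel measures on the unit circle with zero complex
first moment. -/
def ZeroMeanCone : Set (Measure UnitCircle) :=
  {μ | IsFiniteMeasure μ ∧ (∫ w : UnitCircle, (w : ℂ) ∂μ) = 0}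

/-! A measure `ν ≤ μ` is carried by the support `S` of `μ`, so both are determined by their
weights on `S`, and zero mean says that both weight vectors lie in the kernel of
`(c_w) ↦ ∑ c_w w : ℝ^S → ℂ`. This kernel is at most one-dimensional: the points are nonzero,
and when there are three of them they span `ℂ` since `0` is interior to their convex hull.
Hence the weights of `ν` are a multiple of those of `μ`, necessarily a nonnegative one. -/

open Module
open scoped ENNReal

theorem Submodule.span_eq_top_of_nonempty_interior_convexHull {E : Type*} [AddCommGroup E]
    [Module ℝ E] [TopologicalSpace E] [ContinuousAdd E] [ContinuousSMul ℝ E] {s : Set E}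
    (h : (interior (convexHull ℝ s)).Nonempty) : Submodule.span ℝ s = ⊤ :=
  (Submodule.span ℝ s).eq_top_of_nonempty_interior' <|
    h.mono <| interior_mono <| convexHull_min Submodule.subset_span (Submodule.span ℝ s).convex

theorem finrank_ker_linearCombination_le_one {ι : Type*} [Fintype ι] (v : ι → ℂ)
    (hv : ∀ i, v i ≠ 0) (hcard : Fintype.card ι ≤ 3)
    (hspan : Fintype.card ι = 3 → Submodule.span ℝ (Set.range v) = ⊤) :
    finrank ℝ (LinearMap.ker (Fintype.linearCombination ℝ v)) ≤ 1 := by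
  have hrank := LinearMap.finrank_range_add_finrank_ker (Fintype.linearCombination ℝ v)
  rw [Module.finrank_fintype_fun_eq_card, Fintype.range_linearCombination] at hrank
  suffices Fintype.card ι ≤ finrank ℝ (Submodule.span ℝ (Set.range v)) + 1 by omega
  rcases eq_or_ne (Fintype.card ι) 3 with h3 | h3
  · rw [hspan h3, finrank_top, Complex.finrank_real_complex, h3]
  rcases isEmpty_or_nonempty ι with _ | ⟨⟨i⟩⟩
  · simp
  have : Submodule.span ℝ (Set.range v) ≠ ⊥ := by
    rw [Ne, Submodule.span_eq_bot]
    exact fun h => hv i (h _ ⟨i, rfl⟩)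
  have := Submodule.one_le_finrank_iff.2 this
  omega

theorem exists_nonneg_smul_eq_of_finrank_le_one {ι : Type*} [Finite ι]
    {K : Submodule ℝ (ι → ℝ)} (hK : finrank ℝ K ≤ 1) {a b : ι → ℝ}
    (ha : a ∈ K) (hb : b ∈ K) (hb0 : 0 ≤ b) (hba : b ≤ a) : ∃ t : ℝ≥0, b = t • a := by
  obtain rfl | ha0 := eq_or_ne a 0
  · exact ⟨0, by simpa using le_antisymm hba hb0⟩
  have hKa : K = Submodule.span ℝ {a} :=
    (Submodule.eq_of_le_of_finrank_le ((Submodule.span_singleton_le_iff_mem _ _).2 ha)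
      (hK.trans_eq (finrank_span_singleton ha0).symm)).symm
  obtain ⟨t, rfl⟩ := Submodule.mem_span_singleton.1 (hKa ▸ hb)
  obtain ⟨i, hi⟩ := Function.ne_iff.1 ha0
  have hai : 0 < a i := lt_of_le_of_ne ((hb0 i).trans (hba i)) (Ne.symm hi)
  have ht : 0 ≤ t := nonneg_of_mul_nonneg_left (hb0 i) hai
  exact ⟨⟨t, ht⟩, rfl⟩

namespace MeasureTheory.Measure

variable {X : Type*} [MeasurableSpace X] [MeasurableSingletonClass X] {μ ν : Measure X}
  {S : Finset X}

theorem eq_smul_of_ae_mem_finset (hμ : ∀ᵐ x ∂μ, x ∈ S) (hν : ∀ᵐ x ∂ν, x ∈ S)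
    {c : ℝ≥0∞} (h : ∀ x ∈ S, ν {x} = c * μ {x}) : ν = c • μ := by
  rw [ae_mem_finset_iff.1 hμ, ae_mem_finset_iff.1 hν, Finset.smul_sum]
  exact Finset.sum_congr rfl fun x hx => by rw [h x hx, smul_smul]

theorem linearCombination_measureReal_eq_integral {E : Type*} [NormedAddCommGroup E]
    [NormedSpace ℝ E] [CompleteSpace E] (hμ : ∀ᵐ x ∂μ, x ∈ S) {f : X → E}
    (hf : Integrable f μ) :
    Fintype.linearCombination ℝ (fun x : S => f x) (fun x => μ.real {(x : X)}) =
      ∫ x, f x ∂μ := by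
  rw [Fintype.linearCombination_apply, Finset.sum_coe_sort S (fun x => μ.real {x} • f x),
    ← setIntegral_finset S hf.integrableOn, restrict_eq_self_of_ae_mem hμ]

end MeasureTheory.Measure

theorem integrable_coe_unitCircle (ρ : Measure UnitCircle) [IsFiniteMeasure ρ] :
    Integrable (fun w : UnitCircle => (w : ℂ)) ρ :=
  continuous_subtype_val.integrable_of_hasCompactSupport (HasCompactSupport.of_compactSpace _)

theorem finrank_ker_linearCombination_unitCircle_le_one {S : Finset UnitCircle}
    (hcard : S.card ≤ 3)
    (hint : S.card = 3 →
      (0 : ℂ) ∈ interior (convexHull ℝ ((fun w : UnitCircle => (w : ℂ)) '' ↑S))) :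
    finrank ℝ (LinearMap.ker
      (Fintype.linearCombination ℝ fun w : S => ((w : UnitCircle) : ℂ))) ≤ 1 := by
  refine finrank_ker_linearCombination_le_one _
    (fun w => ne_zero_of_mem_unit_sphere (w : UnitCircle)) (by simpa using hcard) fun h3 => ?_
  have hrange : Set.range (fun w : S => ((w : UnitCircle) : ℂ)) =
      (fun w : UnitCircle => (w : ℂ)) '' ↑S := (Set.image_eq_range _ _).symm
  rw [hrange]
  exact Submodule.span_eq_top_of_nonempty_interior_convexHull ⟨0, hint (by simpa using h3)⟩

open MeasureTheory.Measure in
theorem eq_smul_of_le_of_mem_zeroMeanCone {μ ν : Measure UnitCircle} (hμ : μ ∈ ZeroMeanCone)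
    {S : Finset UnitCircle} (hcard : S.card ≤ 3) (hsupp : μ (↑S)ᶜ = 0)
    (hint : S.card = 3 →
      (0 : ℂ) ∈ interior (convexHull ℝ ((fun w : UnitCircle => (w : ℂ)) '' ↑S)))
    (hν : ∫ w : UnitCircle, (w : ℂ) ∂ν = 0) (hle : ν ≤ μ) :
    ∃ t : ℝ≥0, ν = t • μ := by
  obtain ⟨hμfin, hμmean⟩ := hμ
  have : IsFiniteMeasure ν := isFiniteMeasure_of_le μ hle
  have hμS : ∀ᵐ w ∂μ, w ∈ S := ae_iff.2 hsupp
  have hνS : ∀ᵐ w ∂ν, w ∈ S := ae_mono hle hμS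
  have hμker := linearCombination_measureReal_eq_integral hμS (integrable_coe_unitCircle μ)
  have hνker := linearCombination_measureReal_eq_integral hνS (integrable_coe_unitCircle ν)
  rw [hμmean] at hμker
  rw [hν] at hνker
  obtain ⟨t, ht⟩ := exists_nonneg_smul_eq_of_finrank_le_one
    (finrank_ker_linearCombination_unitCircle_le_one hcard hint) hμker hνker
    (fun _ => measureReal_nonneg) (fun _ => ENNReal.toReal_mono (measure_ne_top μ _) (hle _))
  refine ⟨t, eq_smul_of_ae_mem_finset hμS hνS fun w hw => ?_⟩
  have hw' : ν.real {w} = t * μ.real {w} := congrFun ht ⟨w, hw⟩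
  rw [← ofReal_measureReal (measure_ne_top ν _), hw', ENNReal.ofReal_mul t.coe_nonneg,
    ofReal_measureReal (measure_ne_top μ _), ENNReal.ofReal_coe_nnreal]

theorem three_point_zero_mean_measure_is_extreme_direction_general
    (μ : Measure UnitCircle) (hμ : μ ∈ ZeroMeanCone)
    (S : Finset UnitCircle) (hcard : S.card ≤ 3) (hsupp : μ (↑S)ᶜ = 0)
    (hint : S.card = 3 →
      (0 : ℂ) ∈ interior (convexHull ℝ ((fun w : UnitCircle => (w : ℂ)) '' ↑S))) :
    ∀ μ₁ ∈ ZeroMeanCone, ∀ μ₂ ∈ ZeroMeanCone, μ = μ₁ + μ₂ →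
      ∃ t s : ℝ≥0, μ₁ = t • μ ∧ μ₂ = s • μ := by
  rintro μ₁ ⟨-, hμ₁⟩ μ₂ ⟨-, hμ₂⟩ rfl
  obtain ⟨t, ht⟩ := eq_smul_of_le_of_mem_zeroMeanCone hμ hcard hsupp hint hμ₁
    (Measure.le_add_right le_rfl)
  obtain ⟨s, hs⟩ := eq_smul_of_le_of_mem_zeroMeanCone hμ hcard hsupp hint hμ₂
    (Measure.le_add_left le_rfl)
  exact ⟨t, s, ht, hs⟩

/-- Every nonzero zero-mean finite positive measure on the unit circle supported on at
most three points (with `0` interior to the convex hull of the support when it has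
three points) is an extreme direction of the cone of zero-mean positive measures:
any decomposition `μ = μ₁ + μ₂` within the cone has `μ₁, μ₂` nonnegative multiples
of `μ`. -/
theorem three_point_zero_mean_measure_is_extreme_direction
    (μ : Measure UnitCircle) (hμ0 : μ ≠ 0) (hμ : μ ∈ ZeroMeanCone)
    (S : Finset UnitCircle) (hcard : S.card ≤ 3) (hsupp : μ (↑S)ᶜ = 0)
    (hint : S.card = 3 →
      (0 : ℂ) ∈ interior (convexHull ℝ ((fun w : UnitCircle => (w : ℂ)) '' ↑S))) :
    ∀ μ₁ ∈ ZeroMeanCone, ∀ μ₂ ∈ ZeroMeanCone, μ = μ₁ + μ₂ →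
      ∃ t s : ℝ≥0, μ₁ = t • μ ∧ μ₂ = s • μ :=
  three_point_zero_mean_measure_is_extreme_direction_general μ hμ S hcard hsupp hint
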